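/- Let G : Ω → 𝔻 be a nowhere-holomorphic C² function on an open set Ω ⊆ ℂ satisfying the translator equation (Gauss): G_{zz̄} + 2·(conj(G)|G|²/(1 − |G|⁴))·G_z·G_z̄ + 2·(G/(1 − |G|⁴))·|G_z̄|² = 0. Then the pair (g₁, g₂) := (iG, iG) satisfies the compatibility condition (CP): (g₁)_z̄ / [(1 − g₁·conj(g₂))(1 + |g₁|²)] = (g₂)_z̄ / [(1 − conj(g₁)·g₂)(1 + |g₂|²)], and the integrability condition (Ge1): 0 = (g₁)_{zz̄} + (conj(g₂)/(1 − g₁·conj(g₂)) − conj(g₁)/(1 + |g₁|²))·(g₁)_z·(g₁)_z̄ + ((g₁+g₂)/[(1 − conj(g₁)·g₂)(1 + |g₁|²)])·|(g₁)_z̄|². -/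

import Mathlib

open Complex ComplexConjugate

/-- Wirtinger derivative `∂h/∂z = ½(∂h/∂u − i ∂h/∂v)` of a map `h : ℂ → ℂ`. -/
noncomputable def wz (h : ℂ → ℂ) (z : ℂ) : ℂ :=
  (1 / 2) * (fderiv ℝ h z 1 - Complex.I * fderiv ℝ h z Complex.I)

/-- Wirtinger derivative `∂h/∂z̄ = ½(∂h/∂u + i ∂h/∂v)` of a map `h : ℂ → ℂ`. -/
noncomputable def wzb (h : ℂ → ℂ) (z : ℂ) : ℂ :=
  (1 / 2) * (fderiv ℝ h z 1 + Complex.I * fderiv ℝ h z Complex.I)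

/-- Wirtinger derivative `∂x/∂z` of a real-valued map `x : ℂ → ℝ`. -/
noncomputable def wzR (x : ℂ → ℝ) (z : ℂ) : ℂ :=
  (1 / 2) * (((fderiv ℝ x z 1 : ℝ) : ℂ) - Complex.I * ((fderiv ℝ x z Complex.I : ℝ) : ℂ))

/-- The translator equation (Gauss) for `G : Ω → 𝔻`:
`G_{zz̄} + 2(conj(G)|G|²/(1 − |G|⁴))·G_z·G_z̄ + 2(G/(1 − |G|⁴))·|G_z̄|² = 0`. -/
def GaussEq (G : ℂ → ℂ) (z : ℂ) : Prop :=
  wz (wzb G) z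
    + 2 * (conj (G z) * (Complex.normSq (G z) : ℂ)
        / (1 - (Complex.normSq (G z) : ℂ) ^ 2)) * wz G z * wzb G z
    + 2 * (G z / (1 - (Complex.normSq (G z) : ℂ) ^ 2)) * (Complex.normSq (wzb G z) : ℂ) = 0

/-- The function `F` appearing in the compatibility condition (CP). -/
noncomputable def Ffun (g₁ g₂ : ℂ → ℂ) (z : ℂ) : ℂ :=
  wzb g₁ z / ((1 - g₁ z * conj (g₂ z)) * (1 + (Complex.normSq (g₁ z) : ℂ)))

/-- The compatibility condition (CP) at a point `z`. -/
def CP (g₁ g₂ : ℂ → ℂ) (z : ℂ) : Prop :=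
  Ffun g₁ g₂ z = wzb g₂ z / ((1 - conj (g₁ z) * g₂ z) * (1 + (Complex.normSq (g₂ z) : ℂ)))

/-- The integrability condition (Ge1) at a point `z`. -/
def Ge1 (g₁ g₂ : ℂ → ℂ) (z : ℂ) : Prop :=
  0 = wz (wzb g₁) z
      + (conj (g₂ z) / (1 - g₁ z * conj (g₂ z))
          - conj (g₁ z) / (1 + (Complex.normSq (g₁ z) : ℂ))) * wz g₁ z * wzb g₁ z
      + ((g₁ z + g₂ z) / ((1 - conj (g₁ z) * g₂ z) * (1 + (Complex.normSq (g₁ z) : ℂ))))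
          * (Complex.normSq (wzb g₁ z) : ℂ)

/- For `g₁ = g₂ = g` the condition (CP) is a tautology, and (Ge1) reduces to (Gauss) because
`conj g / (1 - |g|²) - conj g / (1 + |g|²) = 2 conj g |g|² / (1 - |g|⁴)`. So it suffices that
(Gauss) is invariant under `G ↦ c G` for a unimodular constant `c`, such as `c = i`: every term
of the equation is multiplied by `c` (the middle one by `conj c · c · c = c`). -/

theorem wz_congr_of_eventuallyEq {f g : ℂ → ℂ} {z : ℂ} (h : f =ᶠ[nhds z] g) :
    wz f z = wz g z := by
  rw [wz, wz, h.fderiv_eq]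

theorem wz_const_mul {h : ℂ → ℂ} {z : ℂ} (c : ℂ) (hd : DifferentiableAt ℝ h z) :
    wz (fun w => c * h w) z = c * wz h z := by
  rw [wz, wz, fderiv_const_mul hd c]
  simp only [FunLike.coe_smul, Pi.smul_apply, smul_eq_mul]
  ring

theorem wzb_const_mul {h : ℂ → ℂ} {z : ℂ} (c : ℂ) (hd : DifferentiableAt ℝ h z) :
    wzb (fun w => c * h w) z = c * wzb h z := by
  rw [wzb, wzb, fderiv_const_mul hd c]
  simp only [FunLike.coe_smul, Pi.smul_apply, smul_eq_mul]
  ring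

theorem ContDiffAt.differentiableAt_wzb {h : ℂ → ℂ} {z : ℂ} (hh : ContDiffAt ℝ 2 h z) :
    DifferentiableAt ℝ (wzb h) z := by
  have hd : DifferentiableAt ℝ (fderiv ℝ h) z :=
    (hh.fderiv_right (m := 1) (by norm_num)).differentiableAt one_ne_zero
  exact ((hd.clm_apply (differentiableAt_const 1)).add
    ((hd.clm_apply (differentiableAt_const I)).const_mul I)).const_mul (1 / 2)

theorem wz_wzb_const_mul {h : ℂ → ℂ} {z : ℂ} (c : ℂ) (hh : ContDiffAt ℝ 2 h z) :
    wz (wzb fun w => c * h w) z = c * wz (wzb h) z := by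
  have hev : wzb (fun w => c * h w) =ᶠ[nhds z] fun w => c * wzb h w := by
    filter_upwards [hh.eventually (by simp)] with w hw
    exact wzb_const_mul c (hw.differentiableAt (by norm_num))
  rw [wz_congr_of_eventuallyEq hev, wz_const_mul c hh.differentiableAt_wzb]

theorem GaussEq.const_mul {G : ℂ → ℂ} {z c : ℂ} (hc : ‖c‖ = 1) (hG : ContDiffAt ℝ 2 G z)
    (hGauss : GaussEq G z) : GaussEq (fun w => c * G w) z := by
  have hd := hG.differentiableAt (by norm_num)
  have hcc : conj c * c = 1 := by
    rw [mul_comm, mul_conj, normSq_eq_norm_sq, hc]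
    norm_num
  have hnc : normSq c = 1 := by rw [normSq_eq_norm_sq, hc, one_pow]
  unfold GaussEq at hGauss ⊢
  rw [wz_wzb_const_mul c hG, wz_const_mul c hd, wzb_const_mul c hd, map_mul, normSq_mul,
    normSq_mul, hnc, one_mul, one_mul]
  linear_combination c * hGauss + 2 * (conj (G z) * (normSq (G z) : ℂ)
    / (1 - (normSq (G z) : ℂ) ^ 2)) * wz G z * wzb G z * c * hcc

theorem CP_self (g : ℂ → ℂ) (z : ℂ) : CP g g z := by
  rw [CP, Ffun, mul_comm (g z)]

theorem Ge1_self_of_gaussEq {g : ℂ → ℂ} {z : ℂ} (hg : ‖g z‖ ≠ 1) (hGauss : GaussEq g z) :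
    Ge1 g g z := by
  unfold GaussEq at hGauss
  unfold Ge1
  rw [mul_conj, mul_comm (conj _), mul_conj]
  set s : ℂ := (normSq (g z) : ℂ) with hs
  have hs1 : 1 - s ≠ 0 := by
    rw [hs, sub_ne_zero, normSq_eq_norm_sq]
    exact_mod_cast fun h => hg (by nlinarith [norm_nonneg (g z)])
  have hs2 : 1 + s ≠ 0 := by
    rw [hs]
    exact_mod_cast (by linarith [normSq_nonneg (g z)] : (0 : ℝ) < 1 + normSq (g z)).ne'
  rw [show (1 : ℂ) - s ^ 2 = (1 - s) * (1 + s) by ring] at hGauss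
  field_simp at hGauss ⊢
  linear_combination -hGauss

theorem iG_iG_satisfies_CP_Ge1_general
    (Ω : Set ℂ) (hΩ : IsOpen Ω) (G : ℂ → ℂ)
    (hG : ContDiffOn ℝ 2 G Ω)
    (hdisc : ∀ z ∈ Ω, ‖G z‖ < 1)
    (hGauss : ∀ z ∈ Ω, GaussEq G z) :
    ∀ z ∈ Ω,
      CP (fun w => Complex.I * G w) (fun w => Complex.I * G w) z
      ∧ Ge1 (fun w => Complex.I * G w) (fun w => Complex.I * G w) z := by
  intro z hz
  have hnorm : ‖I * G z‖ ≠ 1 := by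
    rw [norm_mul, norm_I, one_mul]
    exact (hdisc z hz).ne
  exact ⟨CP_self _ z, Ge1_self_of_gaussEq hnorm
    ((hGauss z hz).const_mul norm_I (hG.contDiffAt (hΩ.mem_nhds hz)))⟩

/-- **(Reduction from `ℝ⁴` to `ℝ³`).** If `G : Ω → 𝔻` is nowhere holomorphic, `C²`, and
satisfies the translator equation (Gauss), then the pair `(g₁, g₂) := (iG, iG)` satisfies
the compatibility condition (CP) and the integrability condition (Ge1). -/
theorem iG_iG_satisfies_CP_Ge1
    (Ω : Set ℂ) (hΩ : IsOpen Ω) (G : ℂ → ℂ)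
    (hG : ContDiffOn ℝ 2 G Ω)
    (hdisc : ∀ z ∈ Ω, ‖G z‖ < 1)
    (hnh : ∀ z ∈ Ω, wzb G z ≠ 0)
    (hGauss : ∀ z ∈ Ω, GaussEq G z) :
    ∀ z ∈ Ω,
      CP (fun w => Complex.I * G w) (fun w => Complex.I * G w) z
      ∧ Ge1 (fun w => Complex.I * G w) (fun w => Complex.I * G w) z :=
  iG_iG_satisfies_CP_Ge1_general Ω hΩ G hG hdisc hGauss
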